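/- arXiv:2001.07260 — 2 statements merged into one kernel-verified Lean document; each statement's English description precedes it below -/
import Mathlib

section
/- If a is a weak composition such that there exists an index i with a_i > a_{i+1} = 0, then the key polynomial κ_a is not quasisymmetric in x_1,...,x_n. -/
open scoped Classical

/-- A Kohnert move: take the rightmost cell of row `r` and move it down in its
column to the highest open row `r'` below (rows indexed from 1). Cells are `(row, column)`. -/
def KohnertMove (D D' : Finset (ℕ × ℕ)) : Prop :=
  ∃ r c r', (r, c) ∈ D ∧ (∀ c', (r, c') ∈ D → c' ≤ c) ∧
    1 ≤ r' ∧ r' < r ∧ (r', c) ∉ D ∧ (∀ r'', r' < r'' → r'' < r → (r'', c) ∈ D) ∧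
    D' = insert (r', c) (D.erase (r, c))

/-- The largest part of a weak composition. -/
def maxPart (a : List ℕ) : ℕ := a.foldr max 0

/-- Number of cells of a diagram in row `i`. -/
def rowWeight (D : Finset (ℕ × ℕ)) (i : ℕ) : ℕ :=
  (D.filter (fun p => p.1 = i)).card

/-- The weight of a diagram, as a finitely supported function recording the
number of cells in each row. -/
noncomputable def wtF (D : Finset (ℕ × ℕ)) : ℕ →₀ ℕ := ∑ p ∈ D, Finsupp.single p.1 1

/-- The exponent vector `x^a` of a weak composition `a` (1-based variables). -/
noncomputable def compFinsupp (a : List ℕ) : ℕ →₀ ℕ :=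
  ∑ i ∈ Finset.range a.length, Finsupp.single (i + 1) (a.getD i 0)

/-- The key (left-justified) diagram of a weak composition `a`. -/
def keyDiagram (a : List ℕ) : Finset (ℕ × ℕ) :=
  (Finset.Icc 1 a.length ×ˢ Finset.Icc 1 (maxPart a)).filter
    (fun p => p.2 ≤ a.getD (p.1 - 1) 0)

/-- The set of key Kohnert diagrams of `a`: all diagrams obtainable from the key
diagram of `a` by sequences of Kohnert moves. -/
noncomputable def KDset (a : List ℕ) : Finset (Finset (ℕ × ℕ)) :=
  ((Finset.Icc 1 a.length ×ˢ Finset.Icc 1 (maxPart a)).powerset).filter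
    (fun D => Relation.ReflTransGen KohnertMove (keyDiagram a) D)

/-- The key polynomial `κ_a = Σ_{D ∈ KD(a)} x^{wt(D)}`. -/
noncomputable def keyPoly (a : List ℕ) : MvPolynomial ℕ ℤ :=
  ∑ D ∈ KDset a, MvPolynomial.monomial (wtF D) (1 : ℤ)

/-- The ordered sequence of nonzero exponents of a monomial in `x_1, …, x_n`. -/
def nzSeq (n : ℕ) (μ : ℕ →₀ ℕ) : List ℕ :=
  ((List.range n).map (fun i => μ (i + 1))).filter (fun x => x ≠ 0)

/-- A polynomial is quasisymmetric in `x_1, …, x_n` if the coefficients of any two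
monomials (in those variables) agree whenever their ordered sequences of nonzero
exponents agree. -/
def IsQuasisymmetricIn (n : ℕ) (f : MvPolynomial ℕ ℤ) : Prop :=
  ∀ μ ν : ℕ →₀ ℕ, (∀ i ∈ μ.support, i ∈ Finset.Icc 1 n) →
    (∀ i ∈ ν.support, i ∈ Finset.Icc 1 n) →
    nzSeq n μ = nzSeq n ν → MvPolynomial.coeff μ f = MvPolynomial.coeff ν f

/-!
The key diagram of `a` is a Kohnert diagram of weight `a`, so `x^a` occurs in `κ_a`. Moving the
exponent `a_i` into the empty slot `i + 1` gives an exponent `ν` with the same sequence of nonzero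
exponents. But a Kohnert move only sends a cell to a lower row, so the number of cells in rows
`1, …, k` never decreases along Kohnert moves: every monomial `x^{wt D}` of `κ_a` satisfies
`wt(D)_1 + ⋯ + wt(D)_i ≥ a_1 + ⋯ + a_i`, which `ν` violates by `a_i > 0`. So `x^ν` has
coefficient `0` while `x^a` does not.
-/

open Finset

lemma getD_le_maxPart (a : List ℕ) (j : ℕ) : a.getD j 0 ≤ maxPart a := by
  induction a generalizing j with
  | nil => simp
  | cons x xs ih =>
    cases j with
    | zero => exact le_max_left _ _
    | succ j => exact (ih j).trans (le_max_right _ _)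

lemma compFinsupp_apply_zero (a : List ℕ) : compFinsupp a 0 = 0 := by
  simp [compFinsupp, Finsupp.finsetSum_apply]

lemma compFinsupp_apply_succ (a : List ℕ) (j : ℕ) : compFinsupp a (j + 1) = a.getD j 0 := by
  simp only [compFinsupp, Finsupp.finsetSum_apply, Finsupp.single_apply, add_left_inj,
    sum_ite_eq', mem_range]
  split_ifs with hj
  · rfl
  · exact (List.getD_eq_default _ _ (not_lt.mp hj)).symm

lemma mem_Icc_of_compFinsupp_ne_zero {a : List ℕ} {j : ℕ} (hj : compFinsupp a j ≠ 0) :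
    j ∈ Icc 1 a.length := by
  cases j with
  | zero => exact absurd (compFinsupp_apply_zero a) hj
  | succ j =>
    rw [compFinsupp_apply_succ] at hj
    have : j < a.length := by
      by_contra! h
      exact hj (List.getD_eq_default _ _ h)
    simp only [mem_Icc]
    omega

lemma wtF_apply (D : Finset (ℕ × ℕ)) (j : ℕ) : wtF D j = rowWeight D j := by
  rw [wtF, Finsupp.finsetSum_apply, rowWeight, card_filter]
  exact sum_congr rfl fun p _ => Finsupp.single_apply

lemma sum_wtF_Iic (D : Finset (ℕ × ℕ)) (k : ℕ) :
    ∑ j ∈ Iic k, wtF D j = #{p ∈ D | p.1 ≤ k} := by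
  rw [card_eq_sum_card_fiberwise (f := Prod.fst) (t := Iic k)
    fun p hp => mem_Iic.mpr (mem_filter.mp hp).2]
  refine sum_congr rfl fun j hj => ?_
  rw [wtF_apply, rowWeight, filter_filter]
  congr 1
  exact filter_congr fun p _ => ⟨fun h => ⟨h ▸ mem_Iic.mp hj, h⟩, And.right⟩

lemma filter_keyDiagram_fst_eq (a : List ℕ) (j : ℕ) :
    {p ∈ keyDiagram a | p.1 = j + 1} = {j + 1} ×ˢ Icc 1 (a.getD j 0) := by
  ext ⟨r, c⟩
  simp only [keyDiagram, mem_filter, mem_product, mem_Icc, mem_singleton]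
  constructor
  · rintro ⟨⟨⟨-, hc⟩, hca⟩, rfl⟩
    exact ⟨rfl, hc.1, hca⟩
  · rintro ⟨rfl, hc, hca⟩
    have hj : j < a.length := by
      by_contra! h
      rw [List.getD_eq_default _ _ h] at hca
      omega
    exact ⟨⟨⟨⟨by omega, hj⟩, hc, hca.trans (getD_le_maxPart a j)⟩, hca⟩, rfl⟩

lemma wtF_keyDiagram (a : List ℕ) : wtF (keyDiagram a) = compFinsupp a := by
  ext j
  rw [wtF_apply, rowWeight]
  cases j with
  | zero =>
    rw [compFinsupp_apply_zero, card_eq_zero, filter_eq_empty_iff]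
    intro p hp
    simp only [keyDiagram, mem_filter, mem_product, mem_Icc] at hp
    omega
  | succ j => simp [filter_keyDiagram_fst_eq, compFinsupp_apply_succ]

lemma KohnertMove.card_filter_fst_le {D D' : Finset (ℕ × ℕ)} (h : KohnertMove D D') (k : ℕ) :
    #{p ∈ D | p.1 ≤ k} ≤ #{p ∈ D' | p.1 ≤ k} := by
  obtain ⟨r, c, r', hrc, -, -, hr', hr'c, -, rfl⟩ := h
  let move : ℕ × ℕ → ℕ × ℕ := fun p => if p = (r, c) then (r', c) else p
  refine card_le_card_of_injOn move (fun p hp => ?_) (fun p hp q hq hpq => ?_)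
  · obtain ⟨hpD, hpk⟩ := mem_filter.mp hp
    by_cases hp' : p = (r, c)
    · subst hp'
      simp [move, hr'.le.trans hpk]
    · simp [move, hp', hpD, hpk]
  · have hne : ∀ s ∈ ({p ∈ D | p.1 ≤ k} : Finset _), s ≠ (r, c) → move s ≠ (r', c) :=
      fun s hs hsrc h => by
        simp only [move, if_neg hsrc] at h
        exact hr'c (h ▸ (mem_filter.mp hs).1)
    by_cases hp' : p = (r, c) <;> by_cases hq' : q = (r, c)
    · rw [hp', hq']
    · exact absurd (hpq.symm.trans (by simp [move, hp'])) (hne q hq hq')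
    · exact absurd (hpq.trans (by simp [move, hq'])) (hne p hp hp')
    · simpa [move, hp', hq'] using hpq

lemma sum_wtF_Iic_le_of_reflTransGen {D D' : Finset (ℕ × ℕ)}
    (h : Relation.ReflTransGen KohnertMove D D') (k : ℕ) :
    ∑ j ∈ Iic k, wtF D j ≤ ∑ j ∈ Iic k, wtF D' j := by
  rw [sum_wtF_Iic, sum_wtF_Iic]
  induction h with
  | refl => exact le_rfl
  | tail _ hmove ih => exact ih.trans (hmove.card_filter_fst_le k)

lemma coeff_keyPoly (a : List ℕ) (μ : ℕ →₀ ℕ) :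
    MvPolynomial.coeff μ (keyPoly a) = #{D ∈ KDset a | wtF D = μ} := by
  simp only [keyPoly, MvPolynomial.coeff_sum, MvPolynomial.coeff_monomial, sum_boole]

lemma coeff_keyPoly_compFinsupp_ne_zero (a : List ℕ) :
    MvPolynomial.coeff (compFinsupp a) (keyPoly a) ≠ 0 := by
  have hkey : keyDiagram a ∈ KDset a :=
    mem_filter.mpr ⟨mem_powerset.mpr (filter_subset _ _), .refl⟩
  rw [coeff_keyPoly, Nat.cast_ne_zero]
  exact card_ne_zero.mpr ⟨_, mem_filter.mpr ⟨hkey, wtF_keyDiagram a⟩⟩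

lemma coeff_keyPoly_eq_zero_of_sum_Iic_lt (a : List ℕ) {μ : ℕ →₀ ℕ} {k : ℕ}
    (h : ∑ j ∈ Iic k, μ j < ∑ j ∈ Iic k, compFinsupp a j) :
    MvPolynomial.coeff μ (keyPoly a) = 0 := by
  rw [coeff_keyPoly, Nat.cast_eq_zero, card_eq_zero, filter_eq_empty_iff]
  rintro D hD rfl
  have hreach := sum_wtF_Iic_le_of_reflTransGen (mem_filter.mp hD).2 k
  rw [wtF_keyDiagram] at hreach
  omega

noncomputable abbrev swapAdj (μ : ℕ →₀ ℕ) (i : ℕ) : ℕ →₀ ℕ :=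
  Finsupp.equivMapDomain (Equiv.swap i (i + 1)) μ

lemma swapAdj_apply (μ : ℕ →₀ ℕ) (i j : ℕ) : swapAdj μ i j = μ (Equiv.swap i (i + 1) j) := by
  rw [Finsupp.equivMapDomain_apply, Equiv.symm_swap]

lemma swapAdj_apply_of_ne {μ : ℕ →₀ ℕ} {i j : ℕ} (hi : j ≠ i) (hi' : j ≠ i + 1) : swapAdj μ i j = μ j := by
  rw [swapAdj_apply, Equiv.swap_apply_of_ne_of_ne hi hi']

lemma sum_Iic_swapAdj_add (μ : ℕ →₀ ℕ) (i : ℕ) :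
    ∑ j ∈ Iic i, swapAdj μ i j + μ i = ∑ j ∈ Iic i, μ j + μ (i + 1) := by
  rw [← Nat.range_succ_eq_Iic, sum_range_succ, sum_range_succ, swapAdj_apply,
    Equiv.swap_apply_left]
  have hlow : ∑ j ∈ range i, swapAdj μ i j = ∑ j ∈ range i, μ j :=
    sum_congr rfl fun j hj => by
      have := mem_range.mp hj
      exact swapAdj_apply_of_ne (by omega) (by omega)
  omega

lemma mem_Icc_of_mem_support_swapAdj {μ : ℕ →₀ ℕ} {i n : ℕ} (hi : i < n) (hμ : μ (i + 1) = 0)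
    (hsupp : ∀ j ∈ μ.support, j ∈ Icc 1 n) {j : ℕ} (hj : j ∈ (swapAdj μ i).support) :
    j ∈ Icc 1 n := by
  rw [Finsupp.mem_support_iff, swapAdj_apply] at hj
  have := hsupp _ (Finsupp.mem_support_iff.mpr hj)
  by_cases hji : j = i
  · subst hji
    rw [Equiv.swap_apply_left] at hj
    exact absurd hμ hj
  by_cases hji' : j = i + 1
  · simp only [mem_Icc]
    omega
  rwa [Equiv.swap_apply_of_ne_of_ne hji hji'] at this

lemma nzSeq_swapAdj {μ : ℕ →₀ ℕ} {i n : ℕ} (hi : 1 ≤ i) (hin : i < n) (hμ : μ (i + 1) = 0) :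
    nzSeq n (swapAdj μ i) = nzSeq n μ := by
  unfold nzSeq
  induction n, hin using Nat.le_induction with
  | base =>
    obtain ⟨k, rfl⟩ : ∃ k, i = k + 1 := ⟨i - 1, by omega⟩
    have hlow : (List.range k).map (fun j => swapAdj μ (k + 1) (j + 1))
        = (List.range k).map (fun j => μ (j + 1)) :=
      List.map_congr_left fun j hj => by
        have := List.mem_range.mp hj
        exact swapAdj_apply_of_ne (by omega) (by omega)
    simp only [List.range_succ, List.map_append, List.filter_append, hlow]
    simp [hμ]
  | succ n _ ih =>
    rw [List.range_succ, List.map_append, List.map_append, List.filter_append,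
      List.filter_append, ih, List.map_singleton, List.map_singleton,
      swapAdj_apply_of_ne (by omega) (by omega)]

/-- If there is an index `i` (1-based) with `a_i > a_{i+1} = 0`, then the key
polynomial `κ_a` is not quasisymmetric in `x_1, …, x_n`. -/
theorem key_not_quasisymmetric_of_zero_after_nonzero (a : List ℕ) (i : ℕ)
    (h1 : 1 ≤ i) (h2 : i < a.length)
    (h3 : 0 < a.getD (i - 1) 0) (h4 : a.getD i 0 = 0) :
    ¬ IsQuasisymmetricIn a.length (keyPoly a) := by
  intro hq
  have hμi : 0 < compFinsupp a i := by
    rwa [show i = i - 1 + 1 by omega, compFinsupp_apply_succ]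
  have hμi' : compFinsupp a (i + 1) = 0 := by rwa [compFinsupp_apply_succ]
  have hsupp : ∀ j ∈ (compFinsupp a).support, j ∈ Icc 1 a.length :=
    fun j hj => mem_Icc_of_compFinsupp_ne_zero (Finsupp.mem_support_iff.mp hj)
  have hν : MvPolynomial.coeff (swapAdj (compFinsupp a) i) (keyPoly a) = 0 :=
    coeff_keyPoly_eq_zero_of_sum_Iic_lt a (k := i) <| by
      have := sum_Iic_swapAdj_add (compFinsupp a) i
      omega
  refine coeff_keyPoly_compFinsupp_ne_zero a ((hq _ _ hsupp ?_ ?_).trans hν)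
  · exact fun j => mem_Icc_of_mem_support_swapAdj h2 hμi' hsupp
  · exact (nzSeq_swapAdj h1 h2 hμi').symm
end

section
/- The raising operator e_i and the lowering operator f_i on diagrams are partial inverses: for diagrams D, D' with at most n rows and 1 ≤ i < n, e_i(D) = D' with D' ≠ 0 if and only if f_i(D') = D. -/
open scoped Classical

/-- The boxes matched by a partial matching. -/
def matchedBoxes (M : Finset ((ℕ × ℕ) × (ℕ × ℕ))) : Finset (ℕ × ℕ) :=
  M.image Prod.fst ∪ M.image Prod.snd

/-- Initial vertical `i`-pairing: pair any boxes of rows `i` and `i+1` in the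
same column. -/
def vInit (i : ℕ) (D : Finset (ℕ × ℕ)) : Finset ((ℕ × ℕ) × (ℕ × ℕ)) :=
  (D.filter (fun p => p.1 = i + 1 ∧ (i, p.2) ∈ D)).image (fun p => (p, (i, p.2)))

/-- One step of the iterative vertical `i`-pairing: pair an unpaired box of row
`i+1` with the rightmost unpaired box of row `i` in a column to its left,
provided all boxes of rows `i`, `i+1` in the columns strictly between them are
already paired. -/
def VStep (i : ℕ) (D : Finset (ℕ × ℕ)) (M M' : Finset ((ℕ × ℕ) × (ℕ × ℕ))) : Prop :=
  ∃ cx cy, (i + 1, cx) ∈ D ∧ (i, cy) ∈ D ∧ cy < cx ∧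
    (i + 1, cx) ∉ matchedBoxes M ∧ (i, cy) ∉ matchedBoxes M ∧
    (∀ p ∈ D, (p.1 = i ∨ p.1 = i + 1) → cy < p.2 → p.2 < cx → p ∈ matchedBoxes M) ∧
    M' = insert ((i + 1, cx), (i, cy)) M

/-- The vertical `i`-pairing of `D`: a matching obtained from the same-column
pairing by iterating `VStep` until no further step applies. -/
def VOutcome (i : ℕ) (D : Finset (ℕ × ℕ)) (M : Finset ((ℕ × ℕ) × (ℕ × ℕ))) : Prop :=
  Relation.ReflTransGen (VStep i D) (vInit i D) M ∧ ∀ M', ¬ VStep i D M M'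

/-- The raising operator `e_i` as a relation: `RaiseRel i D D'` holds when `D'`
is obtained from `D` by pushing the rightmost vertically unpaired box of row
`i+1` down to row `i` (`e_i(D) = 0` corresponds to no `D'` existing). -/
def RaiseRel (i : ℕ) (D D' : Finset (ℕ × ℕ)) : Prop :=
  ∃ M c, VOutcome i D M ∧ (i + 1, c) ∈ D ∧ (i + 1, c) ∉ matchedBoxes M ∧
    (∀ c', (i + 1, c') ∈ D → (i + 1, c') ∉ matchedBoxes M → c' ≤ c) ∧
    D' = insert (i, c) (D.erase (i + 1, c))

/-- The lowering operator `f_i` as a relation: `LowerRel i D D'` holds when `D'`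
is obtained from `D` by pushing the leftmost vertically unpaired box of row `i`
up to row `i+1`. -/
def LowerRel (i : ℕ) (D D' : Finset (ℕ × ℕ)) : Prop :=
  ∃ M c, VOutcome i D M ∧ (i, c) ∈ D ∧ (i, c) ∉ matchedBoxes M ∧
    (∀ c', (i, c') ∈ D → (i, c') ∉ matchedBoxes M → c ≤ c') ∧
    D' = insert (i + 1, c) (D.erase (i, c))

/-!
Moving an unpaired box of column `c` between rows `i` and `i+1` does not change the vertical
`i`-pairing: no pairing step uses column `c`, and the unpaired box there blocks every step across
`c`, both before and after the move. So the pairing of `D` is also a pairing process for the moved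
diagram, and the only step that could newly become available would pair the moved box itself. That
is ruled out by the extremal choice of `c` together with the fact that in a finished pairing every
unpaired box of row `i` lies weakly right of every unpaired box of row `i+1`; the same fact shows
that the moved box is again the extremal unpaired one, so the other operator moves it back.
-/

variable {i c cx cy : ℕ} {D E : Finset (ℕ × ℕ)} {M M' : Finset ((ℕ × ℕ) × (ℕ × ℕ))}

lemma mem_matchedBoxes {q : ℕ × ℕ} : q ∈ matchedBoxes M ↔ ∃ pr ∈ M, pr.1 = q ∨ pr.2 = q := by
  simp only [matchedBoxes, Finset.mem_union, Finset.mem_image]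
  aesop

lemma matchedBoxes_insert (pr : (ℕ × ℕ) × (ℕ × ℕ)) :
    matchedBoxes (insert pr M) = insert pr.1 (insert pr.2 (matchedBoxes M)) := by
  ext q
  simp only [mem_matchedBoxes, Finset.mem_insert, exists_eq_or_imp]
  aesop

lemma mem_vInit {pr : (ℕ × ℕ) × (ℕ × ℕ)} :
    pr ∈ vInit i D ↔ ∃ b, (i + 1, b) ∈ D ∧ (i, b) ∈ D ∧ pr = ((i + 1, b), (i, b)) := by
  simp only [vInit, Finset.mem_image, Finset.mem_filter]
  constructor
  · rintro ⟨⟨r, b⟩, ⟨hb, rfl, hb'⟩, rfl⟩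
    exact ⟨b, hb, hb', rfl⟩
  · rintro ⟨b, hb, hb', rfl⟩
    exact ⟨(i + 1, b), ⟨hb, rfl, hb'⟩, rfl⟩

lemma mem_matchedBoxes_vInit (h1 : (i + 1, c) ∈ D) (h0 : (i, c) ∈ D) :
    (i + 1, c) ∈ matchedBoxes (vInit i D) ∧ (i, c) ∈ matchedBoxes (vInit i D) :=
  ⟨mem_matchedBoxes.2 ⟨_, mem_vInit.2 ⟨c, h1, h0, rfl⟩, Or.inl rfl⟩,
    mem_matchedBoxes.2 ⟨_, mem_vInit.2 ⟨c, h1, h0, rfl⟩, Or.inr rfl⟩⟩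

def VPairable (i : ℕ) (D : Finset (ℕ × ℕ)) (M : Finset ((ℕ × ℕ) × (ℕ × ℕ))) (cx cy : ℕ) : Prop :=
  (i + 1, cx) ∈ D ∧ (i, cy) ∈ D ∧ cy < cx ∧
    (i + 1, cx) ∉ matchedBoxes M ∧ (i, cy) ∉ matchedBoxes M ∧
    (∀ p ∈ D, (p.1 = i ∨ p.1 = i + 1) → cy < p.2 → p.2 < cx → p ∈ matchedBoxes M)

lemma vStep_iff :
    VStep i D M M' ↔ ∃ cx cy, VPairable i D M cx cy ∧ M' = insert ((i + 1, cx), (i, cy)) M := by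
  simp only [VStep, VPairable, and_assoc]

lemma matchedBoxes_subset_of_reflTransGen {M₀ : Finset ((ℕ × ℕ) × (ℕ × ℕ))}
    (h : Relation.ReflTransGen (VStep i D) M₀ M) : matchedBoxes M₀ ⊆ matchedBoxes M := by
  induction h with
  | refl => exact subset_rfl
  | tail _ hstep ih =>
    obtain ⟨cx, cy, -, rfl⟩ := vStep_iff.1 hstep
    rw [matchedBoxes_insert]
    exact ih.trans ((Finset.subset_insert _ _).trans (Finset.subset_insert _ _))

lemma matchedBoxes_subset (h : Relation.ReflTransGen (VStep i D) (vInit i D) M) :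
    matchedBoxes M ⊆ D := by
  induction h with
  | refl =>
    intro q hq
    obtain ⟨pr, hpr, hq⟩ := mem_matchedBoxes.1 hq
    obtain ⟨b, hb, hb', rfl⟩ := mem_vInit.1 hpr
    rcases hq with rfl | rfl <;> assumption
  | tail _ hstep ih =>
    obtain ⟨cx, cy, ⟨hx, hy, -⟩, rfl⟩ := vStep_iff.1 hstep
    rw [matchedBoxes_insert]
    exact Finset.insert_subset hx (Finset.insert_subset hy ih)

theorem VOutcome.le_of_notMem_matchedBoxes (hM : VOutcome i D M) (hy : (i, cy) ∈ D)
    (hx : (i + 1, cx) ∈ D) (hyM : (i, cy) ∉ matchedBoxes M) (hxM : (i + 1, cx) ∉ matchedBoxes M) :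
    cx ≤ cy := by
  induction hk : cx - cy using Nat.strong_induction_on generalizing cx cy with
  | _ k ih =>
  by_contra! hlt
  by_cases hgap : ∃ p ∈ D, (p.1 = i ∨ p.1 = i + 1) ∧ cy < p.2 ∧ p.2 < cx ∧ p ∉ matchedBoxes M
  · -- an unpaired box strictly between gives an unpaired pair of smaller width
    obtain ⟨⟨r, b⟩, hp, rfl | rfl, hb, hb', hpM⟩ := hgap
    · exact absurd (ih _ (by omega) hp hx hpM hxM rfl) (by omega)
    · exact absurd (ih _ (by omega) hy hp hyM hpM rfl) (by omega)
  · push Not at hgap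
    exact hM.2 _ (vStep_iff.2 ⟨cx, cy, ⟨hx, hy, hlt, hxM, hyM, fun p hp hr => hgap p hp hr⟩, rfl⟩)

def AgreeOffColumn (c : ℕ) (D E : Finset (ℕ × ℕ)) : Prop :=
  ∀ p : ℕ × ℕ, p.2 ≠ c → (p ∈ D ↔ p ∈ E)

lemma AgreeOffColumn.symm (h : AgreeOffColumn c D E) : AgreeOffColumn c E D :=
  fun p hp => (h p hp).symm

lemma agreeOffColumn_insert_erase (r s : ℕ) :
    AgreeOffColumn c D (insert (r, c) (D.erase (s, c))) := by
  intro p hp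
  have hr : p ≠ (r, c) := by rintro rfl; exact hp rfl
  have hs : p ≠ (s, c) := by rintro rfl; exact hp rfl
  simp only [Finset.mem_insert, Finset.mem_erase, hr, hs, false_or, ne_eq, not_false_eq_true,
    true_and]

lemma vInit_eq_of_agreeOffColumn (hDE : AgreeOffColumn c D E)
    (hD : (i, c) ∉ D ∨ (i + 1, c) ∉ D) (hE : (i, c) ∉ E ∨ (i + 1, c) ∉ E) :
    vInit i D = vInit i E := by
  have key : ∀ {D E : Finset (ℕ × ℕ)}, AgreeOffColumn c D E →
      ((i, c) ∉ D ∨ (i + 1, c) ∉ D) → vInit i D ⊆ vInit i E := by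
    intro D E hDE hD pr hpr
    obtain ⟨b, hb, hb', rfl⟩ := mem_vInit.1 hpr
    have hbc : b ≠ c := by rintro rfl; tauto
    exact mem_vInit.2 ⟨b, (hDE _ hbc).1 hb, (hDE _ hbc).1 hb', rfl⟩
  exact (key hDE hD).antisymm (key hDE.symm hE)

/-- An unpaired box in column `c` forbids steps across `c`, so a step avoiding column `c` only
involves boxes on which `D` and `E` agree. -/
lemma VPairable.of_agreeOffColumn (hDE : AgreeOffColumn c D E)
    (hcol : (i, c) ∈ D ∨ (i + 1, c) ∈ D) (h0 : (i, c) ∉ matchedBoxes M)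
    (h1 : (i + 1, c) ∉ matchedBoxes M) (h : VPairable i D M cx cy) (hx : cx ≠ c) (hy : cy ≠ c) :
    VPairable i E M cx cy := by
  obtain ⟨hxD, hyD, hlt, hxM, hyM, hgap⟩ := h
  have hspan : ¬(cy < c ∧ c < cx) := by
    rintro ⟨hyc, hcx⟩
    rcases hcol with hc | hc
    · exact h0 (hgap _ hc (Or.inl rfl) hyc hcx)
    · exact h1 (hgap _ hc (Or.inr rfl) hyc hcx)
  refine ⟨(hDE _ hx).1 hxD, (hDE _ hy).1 hyD, hlt, hxM, hyM, fun p hp hr hyp hpx => ?_⟩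
  exact hgap p ((hDE p (by omega)).2 hp) hr hyp hpx

lemma reflTransGen_vStep_of_agreeOffColumn (hDE : AgreeOffColumn c D E)
    (hcol : (i, c) ∈ D ∨ (i + 1, c) ∈ D) (hE : (i, c) ∉ E ∨ (i + 1, c) ∉ E)
    (h : Relation.ReflTransGen (VStep i D) (vInit i D) M)
    (h0 : (i, c) ∉ matchedBoxes M) (h1 : (i + 1, c) ∉ matchedBoxes M) :
    Relation.ReflTransGen (VStep i E) (vInit i E) M := by
  induction h with
  | refl =>
    have hD : (i, c) ∉ D ∨ (i + 1, c) ∉ D := by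
      by_contra! hc
      exact h1 (mem_matchedBoxes_vInit hc.2 hc.1).1
    rw [← vInit_eq_of_agreeOffColumn hDE hD hE]
  | tail _ hstep ih =>
    obtain ⟨cx, cy, hpair, rfl⟩ := vStep_iff.1 hstep
    simp only [matchedBoxes_insert, Finset.mem_insert, Prod.mk.injEq, true_and, not_or] at h0 h1
    obtain ⟨-, hcy, h0⟩ := h0
    obtain ⟨hcx, -, h1⟩ := h1
    refine (ih h0 h1).tail (vStep_iff.2 ⟨cx, cy, ?_, rfl⟩)
    exact hpair.of_agreeOffColumn hDE hcol h0 h1 (by omega) (by omega)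

lemma not_vStep_of_agreeOffColumn (hDE : AgreeOffColumn c D E)
    (hcol : (i, c) ∈ E ∨ (i + 1, c) ∈ E) (h0 : (i, c) ∉ matchedBoxes M)
    (h1 : (i + 1, c) ∉ matchedBoxes M) (hmax : ∀ M', ¬VStep i D M M')
    (hnew : ∀ cx cy, VPairable i E M cx cy → cx ≠ c ∧ cy ≠ c) :
    ∀ M', ¬VStep i E M M' := by
  intro M' hstep
  obtain ⟨cx, cy, hpair, -⟩ := vStep_iff.1 hstep
  obtain ⟨hx, hy⟩ := hnew cx cy hpair
  exact hmax _ (vStep_iff.2 ⟨cx, cy, hpair.of_agreeOffColumn hDE.symm hcol h0 h1 hx hy, rfl⟩)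

theorem RaiseRel.lowerRel (h : RaiseRel i D E) : LowerRel i E D := by
  obtain ⟨M, c, hM, hcD, hcM, hcmax, rfl⟩ := h
  have hicD : (i, c) ∉ D := fun hc =>
    hcM (matchedBoxes_subset_of_reflTransGen hM.1 (mem_matchedBoxes_vInit hcD hc).1)
  have hicM : (i, c) ∉ matchedBoxes M := fun hc => hicD (matchedBoxes_subset hM.1 hc)
  set E := insert (i, c) (D.erase (i + 1, c))
  have hDE : AgreeOffColumn c D E := agreeOffColumn_insert_erase i (i + 1)
  have hicE : (i, c) ∈ E := Finset.mem_insert_self _ _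
  have hcE : (i + 1, c) ∉ E := by simp [E]
  have hnew : ∀ cx cy, VPairable i E M cx cy → cx ≠ c ∧ cy ≠ c := by
    rintro cx cy ⟨hx, -, hlt, hxM, -⟩
    have hxc : cx ≠ c := by rintro rfl; exact hcE hx
    refine ⟨hxc, ?_⟩
    rintro rfl
    exact absurd (hcmax cx ((hDE _ hxc).2 hx) hxM) (by omega)
  have hME : VOutcome i E M :=
    ⟨reflTransGen_vStep_of_agreeOffColumn hDE (Or.inr hcD) (Or.inr hcE) hM.1 hicM hcM,
      not_vStep_of_agreeOffColumn hDE (Or.inl hicE) hicM hcM hM.2 hnew⟩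
  refine ⟨M, c, hME, hicE, hicM, fun c' hc' hc'M => ?_, ?_⟩
  · rcases eq_or_ne c' c with rfl | hne
    · exact le_rfl
    · exact hM.le_of_notMem_matchedBoxes ((hDE _ hne).2 hc') hcD hc'M hcM
  · rw [Finset.erase_insert (by simp [hicD]), Finset.insert_erase hcD]

theorem LowerRel.raiseRel (h : LowerRel i E D) : RaiseRel i D E := by
  obtain ⟨M, c, hM, hcE, hcM, hcmin, rfl⟩ := h
  have hcE' : (i + 1, c) ∉ E := fun hc =>
    hcM (matchedBoxes_subset_of_reflTransGen hM.1 (mem_matchedBoxes_vInit hc hcE).2)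
  have hcM' : (i + 1, c) ∉ matchedBoxes M := fun hc => hcE' (matchedBoxes_subset hM.1 hc)
  set D := insert (i + 1, c) (E.erase (i, c))
  have hED : AgreeOffColumn c E D := agreeOffColumn_insert_erase (i + 1) i
  have hcD : (i + 1, c) ∈ D := Finset.mem_insert_self _ _
  have hicD : (i, c) ∉ D := by simp [D]
  have hnew : ∀ cx cy, VPairable i D M cx cy → cx ≠ c ∧ cy ≠ c := by
    rintro cx cy ⟨-, hy, hlt, -, hyM, -⟩
    have hyc : cy ≠ c := by rintro rfl; exact hicD hy
    refine ⟨?_, hyc⟩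
    rintro rfl
    exact absurd (hcmin cy ((hED _ hyc).2 hy) hyM) (by omega)
  have hMD : VOutcome i D M :=
    ⟨reflTransGen_vStep_of_agreeOffColumn hED (Or.inl hcE) (Or.inl hicD) hM.1 hcM hcM',
      not_vStep_of_agreeOffColumn hED (Or.inr hcD) hcM hcM' hM.2 hnew⟩
  refine ⟨M, c, hMD, hcD, hcM', fun c' hc' hc'M => ?_, ?_⟩
  · rcases eq_or_ne c' c with rfl | hne
    · exact le_rfl
    · exact hM.le_of_notMem_matchedBoxes hcE ((hED _ hne).2 hc') hcM hc'M
  · rw [Finset.erase_insert (by simp [hcE']), Finset.insert_erase hcE]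

theorem raise_lower_partial_inverse_general (i : ℕ) (D D' : Finset (ℕ × ℕ)) :
    RaiseRel i D D' ↔ LowerRel i D' D :=
  ⟨RaiseRel.lowerRel, LowerRel.raiseRel⟩

/-- `e_i` and `f_i` are partial inverses: for diagrams with at most `n` rows and
`1 ≤ i < n`, `e_i(D) = D' ≠ 0` iff `f_i(D') = D`. -/
theorem raise_lower_partial_inverse (n i : ℕ) (h1 : 1 ≤ i) (h2 : i < n)
    (D D' : Finset (ℕ × ℕ)) (hD : ∀ p ∈ D, p.1 ≤ n) (hD' : ∀ p ∈ D', p.1 ≤ n) :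
    RaiseRel i D D' ↔ LowerRel i D' D :=
  raise_lower_partial_inverse_general i D D'
end
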